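/- Let n be a positive natural number, κ ∈ (0,1], and let λ₁, ..., λₙ, λ̃ be (n+1) independent and identically distributed real-valued random variables whose common distribution is atomless. Suppose 1 − κ ≤ 1 − 1/(n+1), and set k = ⌈(n+1)(1−κ)⌉ (so 1 ≤ k ≤ n). Letting λ_(k) denote the k-th smallest value among λ₁, ..., λₙ, the probability P(λ̃ > λ_(k)) is at most κ. -/

import Mathlib

/-!
Write `Z = (λ₁, …, λₙ, λ̃)` and let the rank of a coordinate be the number of coordinates strictly
below it. If `λ̃ > λ_(k)`, the `k` smallest `λᵢ` lie strictly below `λ̃`, so `λ̃` has rank at least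
`k`. The law of an i.i.d. vector is invariant under permutations of the coordinates, so each of the
`n + 1` coordinates has the same probability `p` of having rank at least `k`. For every outcome at
most `n + 1 - k` coordinates have rank at least `k`, whence `(n + 1) p ≤ n + 1 - k`, and the
choice of `k` turns this into `p ≤ κ`.
-/

open MeasureTheory ProbabilityTheory
open scoped ENNReal

/-- The `k`-th order statistic (the `k`-th smallest value, `1 ≤ k ≤ n`) of the
values `v 0, ..., v (n-1)`: the element at position `k - 1` of the list of
values sorted in nondecreasing order. -/
noncomputable def orderStat (n : ℕ) (k : ℕ) (v : Fin n → ℝ) : ℝ :=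
  (List.insertionSort (· ≤ ·) (List.ofFn v)).getD (k - 1) 0

open Finset

lemma card_filter_eq_countP_ofFn {α : Type*} {n : ℕ} (v : Fin n → α) (p : α → Prop)
    [DecidablePred p] : #{i | p (v i)} = (List.ofFn v).countP p := by
  rw [← Multiset.coe_countP, ← Fin.univ_val_map, Multiset.countP_map]
  rfl

lemma le_card_filter_lt_of_orderStat_lt {n k : ℕ} (hkn : k ≤ n) {v : Fin n → ℝ} {y : ℝ}
    (h : orderStat n k v < y) : k ≤ #{i | v i < y} := by
  rcases Nat.eq_zero_or_pos k with rfl | hk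
  · exact Nat.zero_le _
  set l := (List.ofFn v).insertionSort (· ≤ ·)
  have hlen : l.length = n := by simp [l]
  have hstat : orderStat n k v = l[k - 1] := List.getD_eq_getElem _ _ _
  have htake : ∀ a ∈ l.take k, a < y := by
    intro a ha
    obtain ⟨j, hj, rfl⟩ := List.getElem_of_mem ha
    rw [List.getElem_take]
    simp only [List.length_take] at hj
    exact (List.sortedLE_insertionSort.getElem_le_getElem_of_le (by omega)).trans_lt (hstat ▸ h)
  calc k = (l.take k).countP (· < y) := by
        rw [List.countP_eq_length.mpr (by simpa using htake)]; simp; omega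
    _ ≤ l.countP (· < y) := (List.take_sublist k l).countP_le
    _ = #{i | v i < y} := by
        rw [(List.perm_insertionSort _ _).countP_eq]
        exact (card_filter_eq_countP_ofFn v (· < y)).symm

section Rank

variable {ι α : Type*} [Fintype ι] [LinearOrder α]

def rank (x : ι → α) (i : ι) : ℕ := #{j | x j < x i}

lemma rank_comp_perm (x : ι → α) (σ : Equiv.Perm ι) (i : ι) :
    rank (x ∘ σ) i = rank x (σ i) := by
  simp only [rank, card_filter, Function.comp_apply]
  exact Equiv.sum_comp σ (fun j => if x j < x (σ i) then 1 else 0)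

lemma rank_snoc_last {n : ℕ} (v : Fin n → α) (y : α) :
    rank (Fin.snoc v y : Fin (n + 1) → α) (Fin.last n) = #{i | v i < y} := by
  rw [rank, card_filter, card_filter, Fin.sum_univ_castSucc]
  simp

-- An index of least value among those of rank `≥ k` has `k` indices below it, none of rank `≥ k`.
lemma card_filter_le_rank_le (x : ι → α) (k : ℕ) :
    #{i | k ≤ rank x i} ≤ Fintype.card ι - k := by
  classical
  set A : Finset ι := {i | k ≤ rank x i}
  rcases A.eq_empty_or_nonempty with hA | hA
  · simp [hA]
  obtain ⟨i₀, hi₀, hmin⟩ := A.exists_min_image x hA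
  have hbelow : ({j | x j < x i₀} : Finset ι) ⊆ Aᶜ := fun j hj => by
    rw [mem_compl]
    exact fun hjA => (hmin j hjA).not_gt (mem_filter.mp hj).2
  have : k ≤ #Aᶜ := (mem_filter.mp hi₀).2.trans (card_le_card hbelow)
  rw [card_compl] at this
  have := card_le_univ A
  omega

lemma measurableSet_le_rank [TopologicalSpace α] [MeasurableSpace α] [OpensMeasurableSpace α]
    [SecondCountableTopology α] [OrderClosedTopology α] (k : ℕ) (i : ι) :
    MeasurableSet {x : ι → α | k ≤ rank x i} := by
  have : Measurable fun x : ι → α => rank x i := by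
    simp only [rank, card_filter]
    exact Finset.measurable_sum _ fun j _ => Measurable.ite
      (measurableSet_lt (measurable_pi_apply j) (measurable_pi_apply i)) measurable_const
      measurable_const
  exact this measurableSet_Ici

end Rank

section Exchangeable

variable {Ω ι β : Type*} [MeasurableSpace Ω] [MeasurableSpace β]

def Exchangeable (P : Measure Ω) (Z : Ω → ι → β) : Prop :=
  ∀ σ : Equiv.Perm ι, P.map (fun ω => Z ω ∘ σ) = P.map Z

lemma ProbabilityTheory.iIndepFun.exchangeable [Fintype ι] {P : Measure Ω} {f : ι → Ω → β}
    {μ : Measure β} (hf : ∀ i, AEMeasurable (f i) P) (hlaw : ∀ i, P.map (f i) = μ)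
    (hind : iIndepFun f P) :
    Exchangeable P fun ω i => f i ω := fun σ => by
  change P.map (fun ω i => f (σ i) ω) = _
  rw [(hind.precomp σ.injective).map_fun_eq_pi_map fun i => hf (σ i),
    hind.map_fun_eq_pi_map hf]
  simp only [hlaw]

open Classical in
lemma sum_measure_le_of_forall_card_le [Fintype ι] (P : Measure Ω) [IsProbabilityMeasure P]
    {E : ι → Set Ω} (hE : ∀ i, MeasurableSet (E i)) {m : ℕ} (h : ∀ ω, #{i | ω ∈ E i} ≤ m) :
    ∑ i, P (E i) ≤ m :=
  calc ∑ i, P (E i) = ∫⁻ ω, ∑ i, (E i).indicator 1 ω ∂P := by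
        rw [lintegral_finsetSum _ fun i _ => measurable_one.indicator (hE i)]
        simp only [lintegral_indicator_one (hE _)]
    _ ≤ ∫⁻ _, (m : ℝ≥0∞) ∂P := lintegral_mono fun ω => by
        simpa [Set.indicator_apply, ← card_filter] using h ω
    _ = m := by simp

variable [LinearOrder β] [TopologicalSpace β] [OpensMeasurableSpace β]
  [SecondCountableTopology β] [OrderClosedTopology β] {P : Measure Ω} {Z : Ω → ι → β}

lemma Exchangeable.measure_le_rank_eq [Fintype ι] (hZ : Measurable Z) (hZ_ex : Exchangeable P Z)
    (k : ℕ) (i j : ι) : P {ω | k ≤ rank (Z ω) i} = P {ω | k ≤ rank (Z ω) j} := by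
  classical
  have hperm (σ : Equiv.Perm ι) (i : ι) :
      P {ω | k ≤ rank (Z ω) i} = P {ω | k ≤ rank (Z ω) (σ i)} :=
    calc P {ω | k ≤ rank (Z ω) i} = P.map Z {x | k ≤ rank x i} :=
          (Measure.map_apply hZ (measurableSet_le_rank k i)).symm
      _ = P.map (fun ω => Z ω ∘ σ) {x | k ≤ rank x i} := by rw [hZ_ex σ]
      _ = P {ω | k ≤ rank (Z ω ∘ σ) i} :=
          Measure.map_apply (by fun_prop) (measurableSet_le_rank k i)
      _ = P {ω | k ≤ rank (Z ω) (σ i)} := by simp only [rank_comp_perm]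
  simpa using hperm (Equiv.swap i j) i

lemma Exchangeable.card_mul_measure_le_rank_le [Fintype ι] [IsProbabilityMeasure P]
    (hZ : Measurable Z) (hZ_ex : Exchangeable P Z) (k : ℕ) (i : ι) :
    Fintype.card ι * P {ω | k ≤ rank (Z ω) i} ≤ (Fintype.card ι - k : ℕ) :=
  calc Fintype.card ι * P {ω | k ≤ rank (Z ω) i} = ∑ j, P {ω | k ≤ rank (Z ω) j} := by
        simp [hZ_ex.measure_le_rank_eq hZ k _ i]
    _ ≤ (Fintype.card ι - k : ℕ) :=
        sum_measure_le_of_forall_card_le P (E := fun j => {ω | k ≤ rank (Z ω) j})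
          (fun j => hZ (measurableSet_le_rank k j))
          fun ω => by convert card_filter_le_rank_le (Z ω) k; exact Iff.rfl

end Exchangeable

lemma le_ofReal_of_natCast_mul_le {p : ℝ≥0∞} {N k : ℕ} {κ : ℝ} (hN : 0 < N) (hkN : k ≤ N)
    (hp : N * p ≤ (N - k : ℕ)) (hk : N * (1 - κ) ≤ k) : p ≤ ENNReal.ofReal κ := by
  have hp' : p ≤ ((N - k : ℕ) : ℝ≥0∞) / N :=
    (ENNReal.le_div_iff_mul_le (by simp; omega) (by simp)).mpr (by rwa [mul_comm])
  refine hp'.trans ?_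
  rw [← ENNReal.ofReal_natCast, ← ENNReal.ofReal_natCast N,
    ← ENNReal.ofReal_div_of_pos (by exact_mod_cast hN)]
  apply ENNReal.ofReal_le_ofReal
  rw [div_le_iff₀ (by exact_mod_cast hN), Nat.cast_sub hkN]
  linarith

theorem conformal_bound_general
    {Ω : Type*} [MeasurableSpace Ω] (P : Measure Ω) [IsProbabilityMeasure P]
    (n : ℕ)
    (X : Fin n → Ω → ℝ) (Y : Ω → ℝ)
    (hX : ∀ i, Measurable (X i)) (hY : Measurable Y)
    (μ : Measure ℝ)
    (hlawX : ∀ i, Measure.map (X i) P = μ) (hlawY : Measure.map Y P = μ)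
    (hindep : iIndepFun
      (Fin.snoc (fun i : Fin n => X i) Y : Fin (n + 1) → Ω → ℝ) P)
    (κ : ℝ)
    (hcase : 1 - κ ≤ 1 - 1 / ((n : ℝ) + 1))
    (k : ℕ) (hk : k = ⌈((n : ℝ) + 1) * (1 - κ)⌉₊) :
    P {ω | orderStat n k (fun i => X i ω) < Y ω} ≤ ENNReal.ofReal κ := by
  set f : Fin (n + 1) → Ω → ℝ := Fin.snoc (fun i => X i) Y
  have hf : ∀ i, Measurable (f i) := Fin.lastCases (by simpa [f]) fun j => by simpa [f] using hX j
  have hlaw : ∀ i, P.map (f i) = μ :=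
    Fin.lastCases (by simpa [f]) fun j => by simpa [f] using hlawX j
  have hZ : Measurable fun ω i => f i ω := measurable_pi_lambda _ hf
  have hkn : k ≤ n := by
    rw [hk, Nat.ceil_le]
    calc ((n : ℝ) + 1) * (1 - κ) ≤ (n + 1) * (1 - 1 / (n + 1)) :=
          mul_le_mul_of_nonneg_left hcase (by positivity)
      _ = n := by field_simp; ring
  have hevent : {ω | orderStat n k (fun i => X i ω) < Y ω} ⊆
      {ω | k ≤ rank (fun i => f i ω) (Fin.last n)} := fun ω hω => by
    have hsnoc : (fun i => f i ω) = Fin.snoc (fun i => X i ω) (Y ω) :=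
      Fin.comp_snoc (fun g : Ω → ℝ => g ω) _ _
    rw [Set.mem_ofPred_eq, hsnoc, rank_snoc_last]
    exact le_card_filter_lt_of_orderStat_lt hkn hω
  have hrank := (hindep.exchangeable (fun i => (hf i).aemeasurable) hlaw)
    |>.card_mul_measure_le_rank_le hZ k (Fin.last n)
  refine (measure_mono hevent).trans <| le_ofReal_of_natCast_mul_le (N := n + 1) (k := k)
    n.succ_pos (by omega) (by simpa using hrank) ?_
  rw [hk]
  push_cast
  exact Nat.le_ceil _

/-- Conformal calibration bound (probabilistic core of Proposition 1):
if `λ₁, ..., λₙ, λ̃` are i.i.d. with atomless common distribution,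
`κ ∈ (0, 1]` satisfies `1 - κ ≤ 1 - 1/(n+1)`, and
`k = ⌈(n+1)(1-κ)⌉`, then `P(λ̃ > λ_(k)) ≤ κ`. -/
theorem conformal_bound
    {Ω : Type*} [MeasurableSpace Ω] (P : Measure Ω) [IsProbabilityMeasure P]
    (n : ℕ) (hn : 1 ≤ n)
    (X : Fin n → Ω → ℝ) (Y : Ω → ℝ)
    (hX : ∀ i, Measurable (X i)) (hY : Measurable Y)
    (μ : Measure ℝ) [IsProbabilityMeasure μ] [NullSingletonClass μ]
    (hlawX : ∀ i, Measure.map (X i) P = μ) (hlawY : Measure.map Y P = μ)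
    (hindep : iIndepFun
      (Fin.snoc (fun i : Fin n => X i) Y : Fin (n + 1) → Ω → ℝ) P)
    (κ : ℝ) (hκ0 : 0 < κ) (hκ1 : κ ≤ 1)
    (hcase : 1 - κ ≤ 1 - 1 / ((n : ℝ) + 1))
    (k : ℕ) (hk : k = ⌈((n : ℝ) + 1) * (1 - κ)⌉₊) :
    P {ω | orderStat n k (fun i => X i ω) < Y ω} ≤ ENNReal.ofReal κ :=
  conformal_bound_general P n X Y hX hY μ hlawX hlawY hindep κ hcase k hk
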